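/- arXiv:2006.11054 — 2 statements merged into one kernel-verified Lean document; each statement's English description precedes it below -/
import Mathlib

section
/- Let R be a commutative ring with identity, S a multiplicatively closed subset of R satisfying the maximal multiple condition, and M an R-module. Then the following are equivalent: (a) M is a fully S-idempotent module; (b) every cyclic submodule of M is S-idempotent; (c) every element of M is S-idempotent; (d) for all submodules N and K of M there exists s ∈ S such that s(N ∩ K) ⊆ (N :_R M)(K :_R M)M. -/
open Pointwise
/-- A submodule `N` of `M` is `S`-idempotent if there is `s ∈ S` with
`s • N ⊆ (N :_R M)² M ⊆ N`. -/
def Submodule.SIdempotent {R M : Type*} [CommRing R] [AddCommGroup M] [Module R M]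
    (S : Submonoid R) (N : Submodule R M) : Prop :=
  ∃ s ∈ S, s • N ≤ (N.colon ⊤) ^ 2 • (⊤ : Submodule R M) ∧
    (N.colon ⊤) ^ 2 • (⊤ : Submodule R M) ≤ N

/-- `M` is fully `S`-idempotent if every submodule is `S`-idempotent. -/
def Module.FullySIdempotent (R M : Type*) [CommRing R] [AddCommGroup M] [Module R M]
    (S : Submonoid R) : Prop :=
  ∀ N : Submodule R M, N.SIdempotent S

/-- An element `x ∈ M` is `S`-idempotent if there are `s ∈ S` and `a ∈ (Rx :_R M)`
with `s • x = a • x`. -/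
def Module.SIdempotentElem {R M : Type*} [CommRing R] [AddCommGroup M] [Module R M]
    (S : Submonoid R) (x : M) : Prop :=
  ∃ s ∈ S, ∃ a ∈ (Submodule.span R {x}).colon ⊤, s • x = a • x

section Aux
variable {R M : Type*} [CommRing R] [AddCommGroup M] [Module R M]

lemma mem_psmul_iff {s : R} {N : Submodule R M} {y : M} :
    y ∈ s • N ↔ ∃ x ∈ N, s • x = y := by
  rw [← SetLike.mem_coe, Submodule.coe_pointwise_smul]
  exact Set.mem_smul_set

lemma psmul_le {s : R} {N P : Submodule R M} (h : ∀ x ∈ N, s • x ∈ P) : s • N ≤ P := by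
  intro y hy
  obtain ⟨x, hx, rfl⟩ := mem_psmul_iff.mp hy
  exact h x hx

lemma colon_smul_top_le (N : Submodule R M) : N.colon ⊤ • (⊤ : Submodule R M) ≤ N :=
  Submodule.smul_le.mpr fun r hr n _ => Submodule.mem_colon.mp hr n trivial

lemma colon_sq_le (N : Submodule R M) : (N.colon ⊤) ^ 2 • (⊤ : Submodule R M) ≤ N := by
  rw [pow_two, mul_smul]
  exact le_trans (Submodule.smul_mono le_rfl le_top) (colon_smul_top_le N)

lemma colon_mono {N K : Submodule R M} (h : N ≤ K) : N.colon ⊤ ≤ K.colon ⊤ := fun r hr =>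
  Submodule.mem_colon.mpr fun p hp => h (Submodule.mem_colon.mp hr p hp)

end Aux

/-- For `S` satisfying the maximal multiple condition, `M` is fully `S`-idempotent iff
every cyclic submodule is `S`-idempotent, iff every element of `M` is `S`-idempotent, iff
for all submodules `N, K` one has `s(N ∩ K) ⊆ (N :_R M)(K :_R M)M` for some `s ∈ S`. -/
theorem fullySIdempotent_tfae
    {R M : Type*} [CommRing R] [AddCommGroup M] [Module R M] (S : Submonoid R)
    (hS : ∃ s ∈ S, ∀ t ∈ S, t ∣ s) :
    (Module.FullySIdempotent R M S ↔
      ∀ x : M, (Submodule.span R {x}).SIdempotent S) ∧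
    (Module.FullySIdempotent R M S ↔
      ∀ x : M, Module.SIdempotentElem S x) ∧
    (Module.FullySIdempotent R M S ↔
      ∀ N K : Submodule R M, ∃ s ∈ S,
        s • (N ⊓ K) ≤ (N.colon ⊤ * K.colon ⊤) • (⊤ : Submodule R M)) := by
  obtain ⟨s₀, hs₀S, hs₀⟩ := hS
  -- (b) → (c)
  have hbc : (∀ x : M, (Submodule.span R {x}).SIdempotent S) →
      ∀ x : M, Module.SIdempotentElem S x := by
    intro h x
    obtain ⟨s, hsS, h1, _⟩ := h x
    have hsx : s • x ∈ ((Submodule.span R {x}).colon ⊤) ^ 2 • (⊤ : Submodule R M) :=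
      h1 (mem_psmul_iff.mpr ⟨x, Submodule.mem_span_singleton_self x, rfl⟩)
    have hle : ((Submodule.span R {x}).colon ⊤) ^ 2 • (⊤ : Submodule R M) ≤
        ((Submodule.span R {x}).colon ⊤) • Submodule.span R {x} := by
      rw [pow_two, mul_smul]
      exact Submodule.smul_mono le_rfl (colon_smul_top_le _)
    obtain ⟨a, haI, hax⟩ := Submodule.mem_smul_span_singleton.mp (hle hsx)
    exact ⟨s, hsS, a, haI, hax.symm⟩
  -- (c) → (a)
  have hca : (∀ x : M, Module.SIdempotentElem S x) → Module.FullySIdempotent R M S := by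
    intro h N
    refine ⟨s₀, hs₀S, psmul_le ?_, colon_sq_le N⟩
    intro x hx
    obtain ⟨s, hsS, a, haI, hax⟩ := h x
    have haN : a ∈ N.colon ⊤ :=
      colon_mono (Submodule.span_le.mpr (Set.singleton_subset_iff.mpr hx)) haI
    have hs2 : (s * s) • x = (a * a) • x := by
      rw [mul_smul, mul_smul, hax, smul_comm, hax]
    obtain ⟨c, hc⟩ := hs₀ (s * s) (S.mul_mem hsS hsS)
    have : s₀ • x = c • ((a * a) • x) := by
      rw [← hs2, ← mul_smul, mul_comm, ← hc]
    rw [this]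
    exact Submodule.smul_mem _ c
      (Submodule.smul_mem_smul (by rw [pow_two]; exact Ideal.mul_mem_mul haN haN) trivial)
  -- (a) → (d)
  have had : Module.FullySIdempotent R M S →
      ∀ N K : Submodule R M, ∃ s ∈ S,
        s • (N ⊓ K) ≤ (N.colon ⊤ * K.colon ⊤) • (⊤ : Submodule R M) := by
    intro h N K
    obtain ⟨s, hsS, h1, _⟩ := h (N ⊓ K)
    refine ⟨s, hsS, h1.trans (Submodule.smul_mono ?_ le_rfl)⟩
    rw [pow_two]
    exact Ideal.mul_mono (colon_mono inf_le_left) (colon_mono inf_le_right)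
  -- (d) → (a)
  have hda : (∀ N K : Submodule R M, ∃ s ∈ S,
        s • (N ⊓ K) ≤ (N.colon ⊤ * K.colon ⊤) • (⊤ : Submodule R M)) →
      Module.FullySIdempotent R M S := by
    intro h N
    obtain ⟨s, hsS, h1⟩ := h N N
    rw [inf_idem, ← pow_two] at h1
    exact ⟨s, hsS, h1, colon_sq_le N⟩
  refine ⟨⟨fun h x => h _, fun h => hca (hbc h)⟩,
    ⟨fun h x => hbc (fun y => h _) x, hca⟩, ⟨had, hda⟩⟩
end

section
/- Let R be a commutative ring with identity, M an R-module, and S a multiplicatively closed subset of R satisfying the maximal multiple condition. Then M is a fully S-idempotent R-module if and only if S⁻¹M is a fully idempotent S⁻¹R-module. -/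
open Pointwise
/-- `M` is fully idempotent if every submodule `N` equals `(N :_R M)² M`. -/
def Module.FullyIdempotent (R M : Type*) [CommRing R] [AddCommGroup M] [Module R M] : Prop :=
  ∀ N : Submodule R M, N = (N.colon ⊤) ^ 2 • (⊤ : Submodule R M)

/-- `(N : M)² M ≤ N` always. -/
lemma colon_sq_smul_le {R M : Type*} [CommRing R] [AddCommGroup M] [Module R M]
    (N : Submodule R M) : (N.colon ⊤) ^ 2 • (⊤ : Submodule R M) ≤ N :=
  Submodule.smul_le.mpr fun r hr n _ =>
    Submodule.mem_colon.mp (Ideal.pow_le_self two_ne_zero hr) n trivial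

/-- If `S` satisfies the maximal multiple condition, then `M` is a fully `S`-idempotent
`R`-module iff `S⁻¹M` is a fully idempotent `S⁻¹R`-module. -/
theorem fullySIdempotent_iff_localization_fullyIdempotent
    {R M : Type*} [CommRing R] [AddCommGroup M] [Module R M]
    (S : Submonoid R) (hS : ∃ s ∈ S, ∀ t ∈ S, t ∣ s) :
    Module.FullySIdempotent R M S ↔
      Module.FullyIdempotent (Localization S) (LocalizedModule S M) := by
  obtain ⟨s, hsS, hsmax⟩ := hS
  set Rₛ := Localization S
  set Mₛ := LocalizedModule S M
  set f := LocalizedModule.mkLinearMap S M with hf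
  have hfmk : ∀ m : M, f m = LocalizedModule.mk m 1 := fun m => rfl
  constructor
  · -- forward direction
    intro h Q
    set N : Submodule R M := Submodule.comap f (Q.restrictScalars R) with hNdef
    obtain ⟨t, htS, h1, -⟩ := h N
    set I := N.colon (⊤ : Submodule R M) with hI
    set J := Q.colon (⊤ : Submodule Rₛ Mₛ) with hJ
    -- colon map
    have hcolon : ∀ x ∈ I, algebraMap R Rₛ x ∈ J := by
      intro x hx
      rw [hJ]
      rw [Submodule.mem_colon]
      intro p _
      induction p using LocalizedModule.induction_on with
      | h m u =>
        have hxm : f (x • m) ∈ Q := Submodule.mem_colon.mp hx m trivial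
        have key : (algebraMap R Rₛ x) • LocalizedModule.mk m u
            = (Localization.mk 1 u : Rₛ) • f (x • m) := by
          rw [hfmk, ← Localization.mk_one_eq_algebraMap,
            LocalizedModule.mk_smul_mk, LocalizedModule.mk_smul_mk, one_smul,
            one_mul, mul_one]
        rw [key]
        exact Submodule.smul_mem _ _ hxm
    have hmap : ∀ y ∈ (I ^ 2 : Ideal R) • (⊤ : Submodule R M),
        f y ∈ (J ^ 2 : Ideal Rₛ) • (⊤ : Submodule Rₛ Mₛ) := by
      intro y hy
      refine Submodule.smul_induction_on hy ?_ ?_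
      · intro r hr n _
        have hr' : algebraMap R Rₛ r ∈ (J ^ 2 : Ideal Rₛ) := by
          have h2 : Ideal.map (algebraMap R Rₛ) (I ^ 2) ≤ J ^ 2 := by
            rw [Ideal.map_pow]
            exact Ideal.pow_right_mono
              (Ideal.map_le_iff_le_comap.mpr fun x hx => Ideal.mem_comap.mpr (hcolon x hx)) 2
          exact h2 (Ideal.mem_map_of_mem _ hr)
        have : f (r • n) = algebraMap R Rₛ r • f n := by
          rw [map_smul, algebraMap_smul]
        rw [this]
        exact Submodule.smul_mem_smul hr' trivial
      · intro a b ha hb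
        rw [map_add]
        exact Submodule.add_mem _ ha hb
    refine le_antisymm ?_ (colon_sq_smul_le Q)
    intro q hq
    induction q using LocalizedModule.induction_on with
    | h m u =>
      have hmN : m ∈ N := by
        show f m ∈ Q.restrictScalars R
        have : (Localization.mk (u : R) 1 : Rₛ) • LocalizedModule.mk m u = f m := by
          rw [hfmk, LocalizedModule.mk_smul_mk, one_mul, ← Submonoid.smul_def,
            LocalizedModule.mk_cancel]
        rw [show (f m : Mₛ) = (Localization.mk (u : R) 1 : Rₛ) • LocalizedModule.mk m u
          from this.symm]
        exact Submodule.smul_mem _ _ hq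
      have htm : f (t • m) ∈ (J ^ 2 : Ideal Rₛ) • (⊤ : Submodule Rₛ Mₛ) :=
        hmap _ (h1 (Submodule.smul_mem_pointwise_smul m t N hmN))
      have key : LocalizedModule.mk m u
          = (Localization.mk 1 (⟨t, htS⟩ * u) : Rₛ) • f (t • m) := by
        rw [hfmk, LocalizedModule.mk_smul_mk, one_smul, mul_one,
          show t • m = (⟨t, htS⟩ : S) • m from rfl,
          LocalizedModule.mk_cancel_common_left]
      rw [key]
      exact Submodule.smul_mem _ _ htm
  · -- backward direction
    intro h N
    refine ⟨s, hsS, ?_, colon_sq_smul_le N⟩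
    have hmk' : ∀ (n : M) (v : S), IsLocalizedModule.mk' f n v = LocalizedModule.mk n v :=
      fun n v => (IsLocalizedModule.mk_eq_mk' v n).symm
    set Q : Submodule Rₛ Mₛ := Submodule.localized' Rₛ S f N with hQdef
    set I := N.colon (⊤ : Submodule R M) with hI
    set J := Q.colon (⊤ : Submodule Rₛ Mₛ) with hJ
    have hQ : Q = (J ^ 2 : Ideal Rₛ) • (⊤ : Submodule Rₛ Mₛ) := h Q
    -- J ≤ map I
    have claim1 : J ≤ Ideal.map (algebraMap R Rₛ) I := by
      intro a ha
      induction a using Localization.induction_on with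
      | H y =>
        obtain ⟨r, u⟩ := y
        have hr : s * r ∈ I := by
          rw [hI, Submodule.mem_colon]
          intro m _
          have hmem : (Localization.mk r u : Rₛ) • LocalizedModule.mk m 1 ∈ Q :=
            Submodule.mem_colon.mp ha _ trivial
          rw [LocalizedModule.mk_smul_mk, mul_one] at hmem
          obtain ⟨n, hn, v, hv⟩ := (Submodule.mem_localized' Rₛ S f N _).mp hmem
          rw [hmk'] at hv
          obtain ⟨c, hc⟩ := LocalizedModule.mk_eq.mp hv
          have hcv : (c * v : S) • (r • m) ∈ N := by
            rw [mul_smul]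
            rw [← hc]
            exact N.smul_mem _ (N.smul_mem _ hn)
          obtain ⟨d, hd⟩ := hsmax ((c * v : S) : R) (c * v).2
          have : (s * r) • m = d • (((c * v : S) : R) • (r • m)) := by
            rw [hd, mul_smul, smul_smul, smul_smul, smul_smul]
            ring_nf
          rw [this]
          exact N.smul_mem _ (by simpa [Submonoid.smul_def] using hcv)
        have hfact : (Localization.mk r u : Rₛ)
            = Localization.mk 1 (⟨s, hsS⟩ * u) * algebraMap R Rₛ (s * r) := by
          rw [← Localization.mk_one_eq_algebraMap, Localization.mk_mul, one_mul, mul_one]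
          rw [Localization.mk_eq_mk_iff, Localization.r_iff_exists]
          exact ⟨1, by push_cast; ring⟩
        rw [hfact]
        exact Ideal.mul_mem_left _ _ (Ideal.mem_map_of_mem _ hr)
    -- map K • ⊤ ≤ localized' (K • ⊤)
    have claim3 : ∀ K : Ideal R,
        (Ideal.map (algebraMap R Rₛ) K) • (⊤ : Submodule Rₛ Mₛ)
          ≤ (Submodule.localized' Rₛ S f (K • (⊤ : Submodule R M))) := by
      intro K
      rw [Submodule.smul_le]
      intro r hr p _
      induction p using LocalizedModule.induction_on with
      | h m u =>
        induction hr using Submodule.span_induction with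
        | mem x hx =>
          obtain ⟨k, hk, rfl⟩ := hx
          rw [Submodule.mem_localized']
          refine ⟨k • m, Submodule.smul_mem_smul hk trivial, u, ?_⟩
          rw [hmk', ← Localization.mk_one_eq_algebraMap,
            LocalizedModule.mk_smul_mk, one_mul]
        | zero => rw [zero_smul]; exact Submodule.zero_mem _
        | add x y hx hy hx' hy' => rw [add_smul]; exact Submodule.add_mem _ hx' hy'
        | smul c x hx hx' =>
          rw [smul_eq_mul, mul_smul]
          exact Submodule.smul_mem _ _ hx'
    -- conclude
    intro x hx
    have hx' : x ∈ s • (N : Set M) := by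
      rw [← Submodule.coe_pointwise_smul]; exact hx
    obtain ⟨n, hn, rfl⟩ := Set.mem_smul_set.mp hx'
    have hfn : f n ∈ Q := by
      rw [hQdef, Submodule.mem_localized']
      exact ⟨n, hn, 1, by rw [hmk']; exact (hfmk n).symm⟩
    rw [hQ] at hfn
    have hle : (J ^ 2 : Ideal Rₛ) • (⊤ : Submodule Rₛ Mₛ)
        ≤ Submodule.localized' Rₛ S f ((I ^ 2 : Ideal R) • (⊤ : Submodule R M)) := by
      refine le_trans (Submodule.smul_mono_left ?_) (claim3 (I ^ 2))
      rw [Ideal.map_pow]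
      exact Ideal.pow_right_mono claim1 2
    have hfn' := hle hfn
    rw [Submodule.mem_localized'] at hfn'
    obtain ⟨m, hm, u, hu⟩ := hfn'
    rw [hmk', hfmk] at hu
    obtain ⟨c, hc⟩ := LocalizedModule.mk_eq.mp hu
    have hcu : ((c * u : S) : R) • n ∈ (I ^ 2 : Ideal R) • (⊤ : Submodule R M) := by
      have h1 : ((c * u : S) : R) • n = (c : R) • m := by
        have h2 : (c : R) • ((u : R) • n) = (c : R) • m := by
          simpa [Submonoid.smul_def] using hc.symm
        rw [Submonoid.coe_mul, mul_smul, h2]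
      rw [h1]
      exact Submodule.smul_mem _ _ hm
    obtain ⟨d, hd⟩ := hsmax ((c * u : S) : R) (c * u).2
    have : s • n = d • (((c * u : S) : R) • n) := by
      rw [hd, mul_comm, mul_smul]
    rw [this]
    exact Submodule.smul_mem _ _ hcu
end
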